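/- Let u₁ = ((1+M−Q) − √Δ)/2 with Δ = (1+M−Q)² − 4(M+CQ) > 0, 1+M−Q > 0, M+CQ > 0, and u₁ > 0. Then the determinant of the matrix J = [[u₁(1+M−2u₁), −Qu₁],[S, −S]] equals S u₁ √Δ·(−1) < 0; more precisely det J = S u₁(−1−M+Q+2u₁) = −S u₁ √Δ, so P₁ = (u₁, u₁+C) is a saddle point. -/
import Mathlib


/-- For the smaller root `u₁`, the Jacobian at `P₁ = (u₁, u₁+C)` has determinant
`S u₁ (−1−M+Q+2u₁) = −S u₁ √Δ < 0`, so `P₁` is a saddle point. -/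
theorem P1_saddle (M Q C S : ℝ) (hS : 0 < S) (hQ : 0 < Q)
    (h1 : 0 < 1 + M - Q) (h2 : 0 < M + C * Q)
    (Δ : ℝ) (hΔdef : Δ = (1 + M - Q) ^ 2 - 4 * (M + C * Q)) (hΔ : 0 < Δ)
    (u₁ : ℝ) (hu₁ : u₁ = ((1 + M - Q) - Real.sqrt Δ) / 2) (hu₁pos : 0 < u₁) :
    Matrix.det !![u₁ * (1 + M - 2 * u₁), -(Q * u₁); S, -S]
      = S * u₁ * (-1 - M + Q + 2 * u₁) ∧
    Matrix.det !![u₁ * (1 + M - 2 * u₁), -(Q * u₁); S, -S]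
      = -(S * u₁ * Real.sqrt Δ) ∧
    Matrix.det !![u₁ * (1 + M - 2 * u₁), -(Q * u₁); S, -S] < 0 := by
  have hs : 0 < Real.sqrt Δ := Real.sqrt_pos.mpr hΔ
  have hdet : Matrix.det !![u₁ * (1 + M - 2 * u₁), -(Q * u₁); S, -S]
      = S * u₁ * (-1 - M + Q + 2 * u₁) := by
    simp [Matrix.det_fin_two_of]; ring
  have hkey : -1 - M + Q + 2 * u₁ = -Real.sqrt Δ := by
    rw [hu₁]; ring
  refine ⟨hdet, ?_, ?_⟩
  · rw [hdet, hkey]; ring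
  · rw [hdet, hkey]
    nlinarith [mul_pos hS hu₁pos]
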